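/- arXiv:2411.05217 — 3 statements merged into one kernel-verified Lean document; each statement's English description precedes it below -/
import Mathlib

section
/- Let {(X_i, Y_i)}_{i=1}^n be random vectors in ℝ^{d₁} × ℝ^{d₂}, each with the same marginal distribution Π, let α ∈ (1,2], let ψ_α be a Catoni-type truncation function of order α, let θ ∈ ℝ^{d₂×d₁} be a matrix with finite risks R_{ℓ1}(θ) and R_{ℓα}(θ), and let λ > 0. Then for any nonempty subset I ⊆ {1,…,n}, E[exp{ (1/|I|) Σ_{i∈I} ψ_α(λ|Y_i − θ·X_i|) }] ≤ exp{ λ R_{ℓ1}(θ) + α λ^α R_{ℓα}(θ) }. -/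
open MeasureTheory ProbabilityTheory

/-- The matrix–vector product `θ · x`, viewed as a map between Euclidean spaces. -/
noncomputable def mulVecE {d₁ d₂ : ℕ} (θ : Matrix (Fin d₂) (Fin d₁) ℝ)
    (x : EuclideanSpace ℝ (Fin d₁)) : EuclideanSpace ℝ (Fin d₂) :=
  (EuclideanSpace.equiv (Fin d₂) ℝ).symm (θ.mulVec (EuclideanSpace.equiv (Fin d₁) ℝ x))

/-- `ψ` is a Catoni-type truncation function of order `α`. -/
def IsCatoni (α : ℝ) (ψ : ℝ → ℝ) : Prop :=
  ∀ r : ℝ, -Real.log (1 - r + |r| ^ α / α) ≤ ψ r ∧ ψ r ≤ Real.log (1 + r + |r| ^ α / α)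

lemma mulVecE_continuous {d₁ d₂ : ℕ} (θ : Matrix (Fin d₂) (Fin d₁) ℝ) :
    Continuous (mulVecE θ) := by
  unfold mulVecE
  exact (EuclideanSpace.equiv (Fin d₂) ℝ).symm.continuous.comp
    ((θ.mulVecLin).continuous_of_finiteDimensional.comp
      (EuclideanSpace.equiv (Fin d₁) ℝ).continuous)

/-- Catoni-type exponential moment upper bound for the truncated losses. -/
theorem stmt0 {d₁ d₂ n : ℕ} {Ω : Type*} [MeasurableSpace Ω]
    (P : Measure Ω) [IsProbabilityMeasure P]
    (μxy : Measure (EuclideanSpace ℝ (Fin d₁) × EuclideanSpace ℝ (Fin d₂)))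
    [IsProbabilityMeasure μxy]
    (X : Fin n → Ω → EuclideanSpace ℝ (Fin d₁))
    (Y : Fin n → Ω → EuclideanSpace ℝ (Fin d₂))
    (hmeas : ∀ i, Measurable fun ω => (X i ω, Y i ω))
    (hlaw : ∀ i, Measure.map (fun ω => (X i ω, Y i ω)) P = μxy)
    (α : ℝ) (hα₁ : 1 < α) (hα₂ : α ≤ 2)
    (ψ : ℝ → ℝ) (hψ : IsCatoni α ψ)
    (θ : Matrix (Fin d₂) (Fin d₁) ℝ)
    (hR1 : Integrable (fun q => ‖q.2 - mulVecE θ q.1‖) μxy)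
    (hRα : Integrable (fun q => ‖q.2 - mulVecE θ q.1‖ ^ α) μxy)
    (lam : ℝ) (hlam : 0 < lam)
    (I : Finset (Fin n)) (hI : I.Nonempty) :
    ∫ ω, Real.exp ((I.card : ℝ)⁻¹ * ∑ i ∈ I, ψ (lam * ‖Y i ω - mulVecE θ (X i ω)‖)) ∂P
      ≤ Real.exp (lam * (∫ q, ‖q.2 - mulVecE θ q.1‖ ∂μxy)
          + α * lam ^ α * ∫ q, ‖q.2 - mulVecE θ q.1‖ ^ α ∂μxy) := by
  classical
  have hα0 : 0 < α := lt_trans one_pos hα₁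
  set f : EuclideanSpace ℝ (Fin d₁) × EuclideanSpace ℝ (Fin d₂) → ℝ :=
    fun q => ‖q.2 - mulVecE θ q.1‖ with hfdef
  have hfnn : ∀ q, 0 ≤ f q := fun q => norm_nonneg _
  set R1 : ℝ := ∫ q, f q ∂μxy with hR1def
  set Rα : ℝ := ∫ q, f q ^ α ∂μxy with hRαdef
  set φ : EuclideanSpace ℝ (Fin d₁) × EuclideanSpace ℝ (Fin d₂) → ℝ :=
    fun q => 1 + lam * f q + lam ^ α * f q ^ α / α with hφdef
  have hφint : Integrable φ μxy := by
    apply Integrable.add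
    · exact (integrable_const 1).add (hR1.const_mul lam)
    · exact (hRα.const_mul (lam ^ α)).div_const α
  have hφmeas : AEStronglyMeasurable φ μxy := hφint.aestronglyMeasurable
  have hK : ∫ q, φ q ∂μxy = 1 + lam * R1 + lam ^ α * Rα / α := by
    have e1 : Integrable (fun q => lam * f q) μxy := hR1.const_mul lam
    have e2 : Integrable (fun q => lam ^ α * f q ^ α / α) μxy :=
      (hRα.const_mul (lam ^ α)).div_const α
    calc ∫ q, φ q ∂μxy
        = (∫ q, (1 + lam * f q) ∂μxy) + ∫ q, lam ^ α * f q ^ α / α ∂μxy :=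
          integral_add ((integrable_const 1).add e1) e2
      _ = ((∫ _q, (1:ℝ) ∂μxy) + ∫ q, lam * f q ∂μxy) + ∫ q, lam ^ α * f q ^ α / α ∂μxy := by
          rw [integral_add (integrable_const 1) e1]
      _ = 1 + lam * R1 + lam ^ α * Rα / α := by
          rw [integral_const, integral_const_mul, integral_div, integral_const_mul]
          simp [R1, Rα]
  -- transfer to P
  have hint : ∀ i : Fin n, Integrable (fun ω => φ (X i ω, Y i ω)) P := by
    intro i
    have h1 : AEStronglyMeasurable φ (Measure.map (fun ω => (X i ω, Y i ω)) P) := by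
      rw [hlaw i]; exact hφmeas
    have h2 : Integrable φ (Measure.map (fun ω => (X i ω, Y i ω)) P) := by
      rw [hlaw i]; exact hφint
    exact (integrable_map_measure h1 (hmeas i).aemeasurable).mp h2
  have hval : ∀ i : Fin n, ∫ ω, φ (X i ω, Y i ω) ∂P = ∫ q, φ q ∂μxy := by
    intro i
    rw [← hlaw i, integral_map (hmeas i).aemeasurable (by rw [hlaw i]; exact hφmeas)]
  -- pointwise exponential bound for a single term
  have hexp : ∀ (r : ℝ), 0 ≤ r → Real.exp (ψ r) ≤ 1 + r + r ^ α / α := by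
    intro r hr
    have harg : (0 : ℝ) < 1 + r + r ^ α / α := by
      have : (0 : ℝ) ≤ r ^ α / α := div_nonneg (Real.rpow_nonneg hr α) hα0.le
      linarith
    have := (hψ r).2
    rw [abs_of_nonneg hr] at this
    calc Real.exp (ψ r) ≤ Real.exp (Real.log (1 + r + r ^ α / α)) := Real.exp_le_exp.mpr this
      _ = 1 + r + r ^ α / α := Real.exp_log harg
  have hsingle : ∀ q, Real.exp (ψ (lam * f q)) ≤ φ q := by
    intro q
    have h := hexp (lam * f q) (mul_nonneg hlam.le (hfnn q))
    have : (lam * f q) ^ α = lam ^ α * f q ^ α := Real.mul_rpow hlam.le (hfnn q)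
    rw [this] at h
    simpa [hφdef, mul_div_assoc] using h
  -- pointwise Jensen bound
  have hcard : (0 : ℝ) < (I.card : ℝ) := by
    exact_mod_cast Finset.card_pos.mpr hI
  have hpt : ∀ ω, Real.exp ((I.card : ℝ)⁻¹ * ∑ i ∈ I, ψ (lam * f (X i ω, Y i ω)))
      ≤ ∑ i ∈ I, (I.card : ℝ)⁻¹ * φ (X i ω, Y i ω) := by
    intro ω
    have hjensen := convexOn_exp.map_sum_le (t := I)
      (w := fun _ => (I.card : ℝ)⁻¹) (p := fun i => ψ (lam * f (X i ω, Y i ω)))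
      (fun i _ => inv_nonneg.mpr hcard.le)
      (by simp [Finset.sum_const]; field_simp)
      (fun i _ => Set.mem_univ _)
    have heq : (∑ i ∈ I, (I.card : ℝ)⁻¹ • ψ (lam * f (X i ω, Y i ω)))
        = (I.card : ℝ)⁻¹ * ∑ i ∈ I, ψ (lam * f (X i ω, Y i ω)) := by
      rw [Finset.mul_sum]; simp [smul_eq_mul]
    rw [heq] at hjensen
    refine hjensen.trans (Finset.sum_le_sum fun i _ => ?_)
    simp only [smul_eq_mul]
    exact mul_le_mul_of_nonneg_left (hsingle _) (inv_nonneg.mpr hcard.le)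
  -- integrate
  have hGint : Integrable (fun ω => ∑ i ∈ I, (I.card : ℝ)⁻¹ * φ (X i ω, Y i ω)) P :=
    integrable_finset_sum I fun i _ => (hint i).const_mul _
  have hmono : ∫ ω, Real.exp ((I.card : ℝ)⁻¹ * ∑ i ∈ I, ψ (lam * f (X i ω, Y i ω))) ∂P
      ≤ ∫ ω, ∑ i ∈ I, (I.card : ℝ)⁻¹ * φ (X i ω, Y i ω) ∂P :=
    integral_mono_of_nonneg (Filter.Eventually.of_forall fun ω => (Real.exp_pos _).le)
      hGint (Filter.Eventually.of_forall hpt)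
  have hGval : ∫ ω, ∑ i ∈ I, (I.card : ℝ)⁻¹ * φ (X i ω, Y i ω) ∂P
      = 1 + lam * R1 + lam ^ α * Rα / α := by
    rw [integral_finset_sum I fun i _ => (hint i).const_mul _]
    have : ∀ i ∈ I, ∫ ω, (I.card : ℝ)⁻¹ * φ (X i ω, Y i ω) ∂P
        = (I.card : ℝ)⁻¹ * (1 + lam * R1 + lam ^ α * Rα / α) := by
      intro i _
      rw [integral_const_mul, hval i, hK]
    rw [Finset.sum_congr rfl this, Finset.sum_const, nsmul_eq_mul]
    field_simp
  -- final comparison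
  have hRαnn : 0 ≤ Rα := integral_nonneg fun q => Real.rpow_nonneg (hfnn q) α
  have hR1nn : 0 ≤ R1 := integral_nonneg fun q => hfnn q
  have hfinal : 1 + lam * R1 + lam ^ α * Rα / α
      ≤ Real.exp (lam * R1 + α * lam ^ α * Rα) := by
    have h1 : lam ^ α * Rα / α ≤ α * lam ^ α * Rα := by
      rw [div_le_iff₀ hα0]
      have hbase : lam ^ α * Rα ≤ α * lam ^ α * Rα * α := by
        have hnn : 0 ≤ lam ^ α * Rα := mul_nonneg (Real.rpow_nonneg hlam.le α) hRαnn
        calc lam ^ α * Rα = lam ^ α * Rα * 1 := by ring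
          _ ≤ lam ^ α * Rα * (α * α) := by
              apply mul_le_mul_of_nonneg_left _ hnn
              nlinarith
          _ = α * lam ^ α * Rα * α := by ring
      exact hbase
    have h2 : lam * R1 + lam ^ α * Rα / α + 1 ≤ Real.exp (lam * R1 + lam ^ α * Rα / α) :=
      Real.add_one_le_exp _
    have h3 : Real.exp (lam * R1 + lam ^ α * Rα / α)
        ≤ Real.exp (lam * R1 + α * lam ^ α * Rα) :=
      Real.exp_le_exp.mpr (by linarith)
    linarith
  calc ∫ ω, Real.exp ((I.card : ℝ)⁻¹ * ∑ i ∈ I, ψ (lam * ‖Y i ω - mulVecE θ (X i ω)‖)) ∂P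
      = ∫ ω, Real.exp ((I.card : ℝ)⁻¹ * ∑ i ∈ I, ψ (lam * f (X i ω, Y i ω))) ∂P := rfl
    _ ≤ ∫ ω, ∑ i ∈ I, (I.card : ℝ)⁻¹ * φ (X i ω, Y i ω) ∂P := hmono
    _ = 1 + lam * R1 + lam ^ α * Rα / α := hGval
    _ ≤ Real.exp (lam * R1 + α * lam ^ α * Rα) := hfinal
end

section
/- Let {(X_i, Y_i)}_{i=1}^n be random vectors in ℝ^{d₁} × ℝ^{d₂}, each with the same marginal distribution Π, let α ∈ (1,2], let ψ_α be a Catoni-type truncation function of order α, let Θ ⊆ ℝ^{d₂×d₁} be a set of matrices with E_{Π}|X|^α < ∞ and sup_{θ∈Θ} R_{ℓα}(θ) < ∞, and let θ ∈ Θ, λ > 0, δ > 0. Then for any nonempty subset I ⊆ {1,…,n}, E[exp{ −(1/|I|) Σ_{i∈I} ψ_α( λ|Y_i − θ·X_i| − λδ|X_i| ) }] ≤ exp{ λ [ −R_{ℓ1}(θ) + δ E|X₁| + ((2λ)^{α−1}/α)( sup_{θ'∈Θ} R_{ℓα}(θ') + δ^α E|X₁|^α ) ] }. -/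
open MeasureTheory ProbabilityTheory

/-! By convexity of `exp`, the exponential of minus the empirical mean of the truncated losses
`ψ(rᵢ)` is at most the mean of the `exp (-ψ rᵢ) ≤ 1 - rᵢ + |rᵢ|^α/α`, whose expectation under
the common law is `1 - E r + E|r|^α/α`. For the shifted loss `r = λ|Y - θX| - λδ|X|` one has
`E r = λ R_{ℓ1}(θ) - λδ E|X|`, and `|a - b|^α ≤ 2^(α-1) (a^α + b^α)` bounds `E|r|^α` by
`2^(α-1) λ^α (R_{ℓα}(θ) + δ^α E|X|^α)`; conclude with `1 + x ≤ exp x`. -/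

lemma one_sub_add_abs_rpow_div_pos {α : ℝ} (hα : 1 < α) (r : ℝ) :
    0 < 1 - r + |r| ^ α / α := by
  have hα0 : 0 < α := one_pos.trans hα
  -- Bernoulli: `1 + α (|r| - 1) ≤ |r|^α`, so the expression is at least `|r| - r + 1/α`.
  have hbernoulli : 1 + α * (|r| - 1) ≤ (1 + (|r| - 1)) ^ α :=
    one_add_mul_self_le_rpow_one_add (by linarith [abs_nonneg r]) hα.le
  rw [add_sub_cancel] at hbernoulli
  have hdiv : (1 + α * (|r| - 1)) / α ≤ |r| ^ α / α := by gcongr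
  rw [add_div, mul_div_cancel_left₀ _ hα0.ne'] at hdiv
  linarith [le_abs_self r, one_div_pos.2 hα0]

lemma IsCatoni.exp_neg_le {α : ℝ} {ψ : ℝ → ℝ} (hψ : IsCatoni α ψ) (hα : 1 < α) (r : ℝ) :
    Real.exp (-ψ r) ≤ 1 - r + |r| ^ α / α := by
  rw [← Real.exp_log (one_sub_add_abs_rpow_div_pos hα r)]
  exact Real.exp_le_exp.2 (neg_le.1 (hψ r).1)

lemma exp_mean_le_mean_exp {ι : Type*} {I : Finset ι} (hI : I.Nonempty) (g : ι → ℝ) :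
    Real.exp ((I.card : ℝ)⁻¹ * ∑ i ∈ I, g i) ≤ (I.card : ℝ)⁻¹ * ∑ i ∈ I, Real.exp (g i) := by
  have hcard : (0 : ℝ) < I.card := by exact_mod_cast hI.card_pos
  have hweights : ∑ _i ∈ I, (I.card : ℝ)⁻¹ = 1 := by
    rw [Finset.sum_const, nsmul_eq_mul, mul_inv_cancel₀ hcard.ne']
  simpa only [Finset.mul_sum, smul_eq_mul] using
    convexOn_exp.map_sum_le (fun _ _ => inv_nonneg.2 hcard.le) hweights
      (fun _ _ => Set.mem_univ (g _))

lemma IsCatoni.exp_neg_mean_le {α : ℝ} {ψ : ℝ → ℝ} (hψ : IsCatoni α ψ) (hα : 1 < α)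
    {ι : Type*} {I : Finset ι} (hI : I.Nonempty) (r : ι → ℝ) :
    Real.exp (-((I.card : ℝ)⁻¹ * ∑ i ∈ I, ψ (r i)))
      ≤ (I.card : ℝ)⁻¹ * ∑ i ∈ I, (1 - r i + |r i| ^ α / α) := by
  rw [← mul_neg, ← Finset.sum_neg_distrib]
  refine (exp_mean_le_mean_exp hI _).trans ?_
  gcongr with i
  exact hψ.exp_neg_le hα (r i)

section IdenticallyDistributed

variable {Ω E ι : Type*} [MeasurableSpace Ω] [MeasurableSpace E] {P : Measure Ω}
  {μ : Measure E} {Z : ι → Ω → E}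

lemma integrable_mean_comp_of_map_eq (hZ : ∀ i, AEMeasurable (Z i) P)
    (hlaw : ∀ i, P.map (Z i) = μ) {g : E → ℝ} (hg : Integrable g μ) (I : Finset ι) :
    Integrable (fun ω => (I.card : ℝ)⁻¹ * ∑ i ∈ I, g (Z i ω)) P := by
  refine (integrable_finsetSum I fun i _ => ?_).const_mul _
  exact ((hlaw i).symm ▸ hg).comp_aemeasurable (hZ i)

lemma integral_mean_comp_of_map_eq (hZ : ∀ i, AEMeasurable (Z i) P)
    (hlaw : ∀ i, P.map (Z i) = μ) {g : E → ℝ} (hg : Integrable g μ) {I : Finset ι}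
    (hI : I.Nonempty) :
    ∫ ω, (I.card : ℝ)⁻¹ * ∑ i ∈ I, g (Z i ω) ∂P = ∫ x, g x ∂μ := by
  have hcomp : ∀ i, ∫ ω, g (Z i ω) ∂P = ∫ x, g x ∂μ := fun i => by
    rw [← integral_map (hZ i) ((hlaw i).symm ▸ hg.aestronglyMeasurable), hlaw i]
  have hcard : (I.card : ℝ) ≠ 0 := by exact_mod_cast hI.card_pos.ne'
  rw [integral_const_mul, integral_finsetSum I fun i _ =>
      ((hlaw i).symm ▸ hg).comp_aemeasurable (hZ i),
    Finset.sum_congr rfl fun i _ => hcomp i, Finset.sum_const, nsmul_eq_mul,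
    inv_mul_cancel_left₀ hcard]

theorem IsCatoni.integral_exp_neg_mean_le [IsProbabilityMeasure μ] {α : ℝ} {ψ : ℝ → ℝ}
    (hψ : IsCatoni α ψ) (hα : 1 < α) (hZ : ∀ i, AEMeasurable (Z i) P)
    (hlaw : ∀ i, P.map (Z i) = μ) {f : E → ℝ} (hf : Integrable f μ)
    (hfα : Integrable (fun x => |f x| ^ α) μ) {I : Finset ι} (hI : I.Nonempty) :
    ∫ ω, Real.exp (-((I.card : ℝ)⁻¹ * ∑ i ∈ I, ψ (f (Z i ω)))) ∂P
      ≤ 1 - ∫ x, f x ∂μ + (∫ x, |f x| ^ α ∂μ) / α := by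
  have hbound : Integrable (fun x => 1 - f x + |f x| ^ α / α) μ :=
    ((integrable_const 1).sub hf).add (hfα.div_const α)
  calc ∫ ω, Real.exp (-((I.card : ℝ)⁻¹ * ∑ i ∈ I, ψ (f (Z i ω)))) ∂P
      ≤ ∫ ω, (I.card : ℝ)⁻¹ * ∑ i ∈ I, (1 - f (Z i ω) + |f (Z i ω)| ^ α / α) ∂P :=
        integral_mono_of_nonneg (ae_of_all _ fun _ => (Real.exp_pos _).le)
          (integrable_mean_comp_of_map_eq hZ hlaw hbound I)
          (ae_of_all _ fun ω => hψ.exp_neg_mean_le hα hI fun i => f (Z i ω))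
    _ = ∫ x, (1 - f x + |f x| ^ α / α) ∂μ := integral_mean_comp_of_map_eq hZ hlaw hbound hI
    _ = 1 - ∫ x, f x ∂μ + (∫ x, |f x| ^ α ∂μ) / α := by
        rw [integral_add (f := fun x => 1 - f x) ((integrable_const 1).sub hf)
            (hfα.div_const α), integral_sub (f := fun _ => 1) (integrable_const 1) hf, integral_div, integral_const, probReal_univ,
          one_smul]

end IdenticallyDistributed

lemma abs_mul_sub_mul_rpow_le {lam δ u v p : ℝ} (hlam : 0 < lam) (hδ : 0 ≤ δ) (hu : 0 ≤ u)
    (hv : 0 ≤ v) (hp : 1 ≤ p) :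
    |lam * u - lam * δ * v| ^ p ≤ lam * (2 * lam) ^ (p - 1) * (u ^ p + δ ^ p * v ^ p) := by
  have hδv : 0 ≤ δ * v := mul_nonneg hδ hv
  have habs : |lam * u - lam * δ * v| ≤ lam * (u + δ * v) := by
    rw [abs_le]; constructor <;> nlinarith
  have hsum : ((u.toNNReal : ℝ) + (δ * v).toNNReal) ^ p
      ≤ 2 ^ (p - 1) * ((u.toNNReal : ℝ) ^ p + ((δ * v).toNNReal : ℝ) ^ p) := by
    exact_mod_cast NNReal.rpow_add_le_mul_rpow_add_rpow u.toNNReal (δ * v).toNNReal hp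
  rw [Real.coe_toNNReal _ hu, Real.coe_toNNReal _ hδv, Real.mul_rpow hδ hv] at hsum
  have hlam_pow : lam ^ p = lam * lam ^ (p - 1) := by
    rw [Real.rpow_sub hlam, Real.rpow_one, mul_div_cancel₀ _ hlam.ne']
  calc |lam * u - lam * δ * v| ^ p ≤ (lam * (u + δ * v)) ^ p :=
        Real.rpow_le_rpow (abs_nonneg _) habs (by linarith)
    _ = lam ^ p * (u + δ * v) ^ p := Real.mul_rpow hlam.le (add_nonneg hu hδv)
    _ ≤ lam ^ p * (2 ^ (p - 1) * (u ^ p + δ ^ p * v ^ p)) := by gcongr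
    _ = lam * (2 * lam) ^ (p - 1) * (u ^ p + δ ^ p * v ^ p) := by
        rw [hlam_pow, Real.mul_rpow zero_le_two hlam.le]; ring

section ShiftedLoss

variable {E : Type*} [MeasurableSpace E] {μ : Measure E} {u v : E → ℝ} {lam δ p : ℝ}

lemma integrable_abs_mul_sub_mul_rpow (hu0 : ∀ x, 0 ≤ u x) (hv0 : ∀ x, 0 ≤ v x)
    (hu : AEStronglyMeasurable u μ) (hv : AEStronglyMeasurable v μ)
    (hup : Integrable (fun x => u x ^ p) μ) (hvp : Integrable (fun x => v x ^ p) μ)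
    (hlam : 0 < lam) (hδ : 0 ≤ δ) (hp : 1 ≤ p) :
    Integrable (fun x => |lam * u x - lam * δ * v x| ^ p) μ := by
  refine ((hup.add (hvp.const_mul (δ ^ p))).const_mul (lam * (2 * lam) ^ (p - 1))).mono'
    (((Real.continuous_rpow_const (by linarith)).comp continuous_abs).comp_aestronglyMeasurable
      ((hu.const_mul lam).sub (hv.const_mul (lam * δ)))) (ae_of_all _ fun x => ?_)
  rw [Real.norm_eq_abs, abs_of_nonneg (by positivity)]
  exact abs_mul_sub_mul_rpow_le hlam hδ (hu0 x) (hv0 x) hp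

lemma integral_abs_mul_sub_mul_rpow_le (hu0 : ∀ x, 0 ≤ u x) (hv0 : ∀ x, 0 ≤ v x)
    (hu : AEStronglyMeasurable u μ) (hv : AEStronglyMeasurable v μ)
    (hup : Integrable (fun x => u x ^ p) μ) (hvp : Integrable (fun x => v x ^ p) μ)
    (hlam : 0 < lam) (hδ : 0 ≤ δ) (hp : 1 ≤ p) :
    ∫ x, |lam * u x - lam * δ * v x| ^ p ∂μ
      ≤ lam * (2 * lam) ^ (p - 1) * (∫ x, u x ^ p ∂μ + δ ^ p * ∫ x, v x ^ p ∂μ) := by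
  calc ∫ x, |lam * u x - lam * δ * v x| ^ p ∂μ
      ≤ ∫ x, lam * (2 * lam) ^ (p - 1) * (u x ^ p + δ ^ p * v x ^ p) ∂μ :=
        integral_mono (integrable_abs_mul_sub_mul_rpow hu0 hv0 hu hv hup hvp hlam hδ hp)
          ((hup.add (hvp.const_mul _)).const_mul _)
          fun x => abs_mul_sub_mul_rpow_le hlam hδ (hu0 x) (hv0 x) hp
    _ = _ := by rw [integral_const_mul, integral_add hup (hvp.const_mul _), integral_const_mul]

end ShiftedLoss

theorem stmt1_general {d₁ d₂ n : ℕ} {Ω : Type*} [MeasurableSpace Ω]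
    (P : Measure Ω)
    (μxy : Measure (EuclideanSpace ℝ (Fin d₁) × EuclideanSpace ℝ (Fin d₂)))
    [IsProbabilityMeasure μxy]
    (X : Fin n → Ω → EuclideanSpace ℝ (Fin d₁))
    (Y : Fin n → Ω → EuclideanSpace ℝ (Fin d₂))
    (hmeas : ∀ i, Measurable fun ω => (X i ω, Y i ω))
    (hlaw : ∀ i, Measure.map (fun ω => (X i ω, Y i ω)) P = μxy)
    (α : ℝ) (hα₁ : 1 < α)
    (ψ : ℝ → ℝ) (hψ : IsCatoni α ψ)
    (Θ : Set (Matrix (Fin d₂) (Fin d₁) ℝ))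
    -- finite α-th moment of X
    (hX1 : Integrable (fun q => ‖q.1‖) μxy)
    (hXα : Integrable (fun q => ‖q.1‖ ^ α) μxy)
    -- the ℓα-risk is uniformly bounded over Θ, with supremum S
    (hRαInt : ∀ θ ∈ Θ, Integrable (fun q => ‖q.2 - mulVecE θ q.1‖ ^ α) μxy)
    (S : ℝ)
    (hS : IsLUB {r : ℝ | ∃ θ ∈ Θ, r = ∫ q, ‖q.2 - mulVecE θ q.1‖ ^ α ∂μxy} S)
    (θ : Matrix (Fin d₂) (Fin d₁) ℝ) (hθ : θ ∈ Θ)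
    (hR1Int : Integrable (fun q => ‖q.2 - mulVecE θ q.1‖) μxy)
    (lam δ : ℝ) (hlam : 0 < lam) (hδ : 0 < δ)
    (I : Finset (Fin n)) (hI : I.Nonempty) :
    ∫ ω, Real.exp (-((I.card : ℝ)⁻¹
          * ∑ i ∈ I, ψ (lam * ‖Y i ω - mulVecE θ (X i ω)‖ - lam * δ * ‖X i ω‖))) ∂P
      ≤ Real.exp (lam * (-(∫ q, ‖q.2 - mulVecE θ q.1‖ ∂μxy)
          + δ * (∫ q, ‖q.1‖ ∂μxy)
          + (2 * lam) ^ (α - 1) / α * (S + δ ^ α * ∫ q, ‖q.1‖ ^ α ∂μxy))) := by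
  set r := fun q : EuclideanSpace ℝ (Fin d₁) × EuclideanSpace ℝ (Fin d₂) =>
    lam * ‖q.2 - mulVecE θ q.1‖ - lam * δ * ‖q.1‖
  have hr : Integrable r μxy := (hR1Int.const_mul lam).sub (hX1.const_mul (lam * δ))
  have hr_mean : ∫ q, r q ∂μxy
      = lam * ∫ q, ‖q.2 - mulVecE θ q.1‖ ∂μxy - lam * δ * ∫ q, ‖q.1‖ ∂μxy := by
    rw [integral_sub (hR1Int.const_mul lam) (hX1.const_mul _), integral_const_mul,
      integral_const_mul]
  have hr_pow := integrable_abs_mul_sub_mul_rpow (fun _ => norm_nonneg _)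
    (fun _ => norm_nonneg _) hR1Int.aestronglyMeasurable hX1.aestronglyMeasurable (hRαInt θ hθ) hXα hlam hδ.le hα₁.le
  have hr_pow_mean : (∫ q, |r q| ^ α ∂μxy) / α
      ≤ lam * ((2 * lam) ^ (α - 1) / α * (S + δ ^ α * ∫ q, ‖q.1‖ ^ α ∂μxy)) := by
    have hRα_le_S := hS.1 ⟨θ, hθ, rfl⟩
    have hrisk := integral_abs_mul_sub_mul_rpow_le (fun _ => norm_nonneg _)
      (fun _ => norm_nonneg _) hR1Int.aestronglyMeasurable hX1.aestronglyMeasurable (hRαInt θ hθ) hXα hlam hδ.le hα₁.le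
    calc (∫ q, |r q| ^ α ∂μxy) / α
        ≤ lam * (2 * lam) ^ (α - 1) * (S + δ ^ α * ∫ q, ‖q.1‖ ^ α ∂μxy) / α := by
          gcongr
          exact hrisk.trans (by gcongr)
      _ = _ := by ring
  calc _ ≤ 1 - ∫ q, r q ∂μxy + (∫ q, |r q| ^ α ∂μxy) / α :=
        hψ.integral_exp_neg_mean_le hα₁ (fun i => (hmeas i).aemeasurable) hlaw hr hr_pow hI
    _ ≤ _ := by
        rw [hr_mean]
        refine le_trans ?_ (Real.add_one_le_exp _)
        linarith

/-- Catoni-type exponential moment lower-tail bound for the shifted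
truncated losses. -/
theorem stmt1 {d₁ d₂ n : ℕ} {Ω : Type*} [MeasurableSpace Ω]
    (P : Measure Ω) [IsProbabilityMeasure P]
    (μxy : Measure (EuclideanSpace ℝ (Fin d₁) × EuclideanSpace ℝ (Fin d₂)))
    [IsProbabilityMeasure μxy]
    (X : Fin n → Ω → EuclideanSpace ℝ (Fin d₁))
    (Y : Fin n → Ω → EuclideanSpace ℝ (Fin d₂))
    (hmeas : ∀ i, Measurable fun ω => (X i ω, Y i ω))
    (hlaw : ∀ i, Measure.map (fun ω => (X i ω, Y i ω)) P = μxy)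
    (α : ℝ) (hα₁ : 1 < α) (hα₂ : α ≤ 2)
    (ψ : ℝ → ℝ) (hψ : IsCatoni α ψ)
    (Θ : Set (Matrix (Fin d₂) (Fin d₁) ℝ))
    -- finite α-th moment of X
    (hX1 : Integrable (fun q => ‖q.1‖) μxy)
    (hXα : Integrable (fun q => ‖q.1‖ ^ α) μxy)
    -- the ℓα-risk is uniformly bounded over Θ, with supremum S
    (hRαInt : ∀ θ ∈ Θ, Integrable (fun q => ‖q.2 - mulVecE θ q.1‖ ^ α) μxy)
    (S : ℝ)
    (hS : IsLUB {r : ℝ | ∃ θ ∈ Θ, r = ∫ q, ‖q.2 - mulVecE θ q.1‖ ^ α ∂μxy} S)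
    (θ : Matrix (Fin d₂) (Fin d₁) ℝ) (hθ : θ ∈ Θ)
    (hR1Int : Integrable (fun q => ‖q.2 - mulVecE θ q.1‖) μxy)
    (lam δ : ℝ) (hlam : 0 < lam) (hδ : 0 < δ)
    (I : Finset (Fin n)) (hI : I.Nonempty) :
    ∫ ω, Real.exp (-((I.card : ℝ)⁻¹
          * ∑ i ∈ I, ψ (lam * ‖Y i ω - mulVecE θ (X i ω)‖ - lam * δ * ‖X i ω‖))) ∂P
      ≤ Real.exp (lam * (-(∫ q, ‖q.2 - mulVecE θ q.1‖ ∂μxy)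
          + δ * (∫ q, ‖q.1‖ ∂μxy)
          + (2 * lam) ^ (α - 1) / α * (S + δ ^ α * ∫ q, ‖q.1‖ ^ α ∂μxy))) :=
  stmt1_general P μxy X Y hmeas hlaw α hα₁ ψ hψ Θ hX1 hXα hRαInt S hS θ hθ hR1Int lam δ hlam hδ I hI
end

section
/- Let μ ∈ (1,2] and ρ ∈ (0,1), and let Y follow the toy heavy-tailed distribution with atom mass ρ at 0 and density (1−ρ)μ/(2|x|^{μ+1}) on {|x| ≥ 1}. Then for the ℓ₁-risk R_{ℓ1}(θ) = E|Y − θ|, one has R_{ℓ1}(θ) − R_{ℓ1}(0) ≥ ρ if and only if |θ| ≥ 1. -/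
open MeasureTheory

/-- The toy heavy-tailed distribution: an atom of mass `ρ` at `0`, plus the
density `(1-ρ)·μp/(2|x|^{μp+1})` on `{|x| ≥ 1}`. -/
noncomputable def toyMeasure (μp ρ : ℝ) : Measure ℝ :=
  ENNReal.ofReal ρ • Measure.dirac 0 +
    volume.withDensity fun x =>
      ENNReal.ofReal (if 1 ≤ |x| then (1 - ρ) * μp / (2 * |x| ^ (μp + 1)) else 0)

/-- The population ℓ₁-risk `R_{ℓ1}(θ) = E|Y − θ|` for the toy distribution. -/
noncomputable def toyRisk (μp ρ θ : ℝ) : ℝ := ∫ y, |y - θ| ∂toyMeasure μp ρ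

namespace Stmt12Aux

open Set Real NNReal ENNReal

/-- The density of the absolutely continuous part. -/
noncomputable def tq (μp ρ : ℝ) (y : ℝ) : ℝ :=
  if 1 ≤ |y| then (1 - ρ) * μp / (2 * |y| ^ (μp + 1)) else 0

variable {μp ρ : ℝ}

lemma measurable_tq : Measurable (tq μp ρ) := by
  refine Measurable.ite (measurableSet_le measurable_const measurable_id.abs) ?_ measurable_const
  exact measurable_const.div ((measurable_id.abs.pow_const (μp + 1)).const_mul 2)

lemma tq_nonneg (hμ : 1 < μp) (hρ1 : ρ < 1) (y : ℝ) : 0 ≤ tq μp ρ y := by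
  unfold tq
  split
  · apply div_nonneg (by nlinarith)
    have : (0:ℝ) < |y| := lt_of_lt_of_le one_pos ‹_›
    positivity
  · exact le_refl 0

lemma tq_even (y : ℝ) : tq μp ρ (-y) = tq μp ρ y := by simp [tq, abs_neg]

lemma tq_eq {y : ℝ} (hy : 1 ≤ y) : tq μp ρ y = ((1 - ρ) * μp / 2) * y ^ (-(μp + 1)) := by
  have h0 : (0:ℝ) < y := lt_of_lt_of_le one_pos hy
  rw [tq, if_pos (by rwa [abs_of_pos h0]), abs_of_pos h0, rpow_neg h0.le]
  ring

lemma integrableOn_Ici (hμ : 1 < μp) (hρ1 : ρ < 1) (θ : ℝ) :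
    IntegrableOn (fun y => |y - θ| * tq μp ρ y) (Ici (1:ℝ)) := by
  have hmeas : AEStronglyMeasurable (fun y => |y - θ| * tq μp ρ y)
      (volume.restrict (Ici 1)) :=
    (((measurable_id.sub_const θ).abs).mul measurable_tq).aestronglyMeasurable
  have hint : IntegrableOn
      (fun y : ℝ => ((1 + |θ|) * ((1 - ρ) * μp / 2)) * y ^ (-μp)) (Ici (1:ℝ)) := by
    rw [integrableOn_Ici_iff_integrableOn_Ioi]
    exact (integrableOn_Ioi_rpow_of_lt (by linarith) one_pos).const_mul _
  refine Integrable.mono' hint hmeas ?_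
  filter_upwards [ae_restrict_mem measurableSet_Ici] with y hy
  have h1 : (1:ℝ) ≤ y := hy
  have h0 : (0:ℝ) < y := by linarith
  rw [Real.norm_eq_abs, abs_mul, abs_abs, abs_of_nonneg (tq_nonneg hμ hρ1 y), tq_eq h1]
  have hb : |y - θ| ≤ (1 + |θ|) * y := by
    have := abs_sub y θ
    have h2 : |y| = y := abs_of_pos h0
    nlinarith [abs_nonneg θ, abs_sub_abs_le_abs_sub y θ, abs_sub y θ]
  have hme : y * y ^ (-(μp + 1)) = y ^ (-μp) := by
    rw [show -μp = 1 + (-(μp + 1)) by ring, Real.rpow_add h0, Real.rpow_one]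
  calc |y - θ| * ((1 - ρ) * μp / 2 * y ^ (-(μp + 1)))
      ≤ ((1 + |θ|) * y) * ((1 - ρ) * μp / 2 * y ^ (-(μp + 1))) := by
        apply mul_le_mul_of_nonneg_right hb
        have h3 : (0:ℝ) < y ^ (-(μp + 1)) := rpow_pos_of_pos h0 _
        have h4 : (0:ℝ) < (1 - ρ) * μp := mul_pos (by linarith) (by linarith)
        positivity
    _ = ((1 + |θ|) * ((1 - ρ) * μp / 2)) * (y * y ^ (-(μp + 1))) := by ring
    _ = ((1 + |θ|) * ((1 - ρ) * μp / 2)) * y ^ (-μp) := by rw [hme]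

lemma integrableOn_Iic (hμ : 1 < μp) (hρ1 : ρ < 1) (θ : ℝ) :
    IntegrableOn (fun y => |y - θ| * tq μp ρ y) (Iic (-1:ℝ)) := by
  have h := ((Measure.measurePreserving_neg (volume : Measure ℝ)).integrableOn_comp_preimage
      (Homeomorph.neg ℝ).measurableEmbedding
      (f := fun y => |y - (-θ)| * tq μp ρ y) (s := Ici 1)).mpr (integrableOn_Ici hμ hρ1 (-θ))
  have hset : ((Neg.neg : ℝ → ℝ) ⁻¹' (Ici (1:ℝ))) = Iic (-1:ℝ) := by
    ext x; simp [le_neg]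
  have hfun : ((fun y => |y - (-θ)| * tq μp ρ y) ∘ (Neg.neg : ℝ → ℝ)) =
      fun y => |y - θ| * tq μp ρ y := by
    ext y
    simp only [Function.comp_apply]
    rw [tq_even, show -y - -θ = -(y - θ) by ring, abs_neg]
  rwa [hset, hfun] at h

lemma support_subset (θ : ℝ) :
    Function.support (fun y => |y - θ| * tq μp ρ y) ⊆ Iic (-1:ℝ) ∪ Ici 1 := by
  intro y hy
  rw [Set.mem_union, Set.mem_Iic, Set.mem_Ici]
  by_contra h
  push_neg at h
  apply hy
  have habs : |y| < 1 := abs_lt.mpr ⟨by linarith [h.1], by linarith [h.2]⟩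
  simp [tq, not_le.mpr habs]

lemma integrable_full (hμ : 1 < μp) (hρ1 : ρ < 1) (θ : ℝ) :
    Integrable (fun y => |y - θ| * tq μp ρ y) := by
  rw [← integrableOn_iff_integrable_of_support_subset (support_subset θ)]
  exact (integrableOn_Iic hμ hρ1 θ).union (integrableOn_Ici hμ hρ1 θ)

/-- The risk decomposes as atom part plus density part. -/
lemma toyRisk_eq (hμ : 1 < μp) (hρ0 : 0 < ρ) (hρ1 : ρ < 1) (θ : ℝ) :
    toyRisk μp ρ θ = ρ * |θ| + ∫ y, |y - θ| * tq μp ρ y := by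
  have hq : (fun x => ENNReal.ofReal (if 1 ≤ |x| then (1 - ρ) * μp / (2 * |x| ^ (μp + 1)) else 0))
      = fun x => ((tq μp ρ x).toNNReal : ℝ≥0∞) := by
    ext x; rfl
  have hmeas : Measurable fun x => (tq μp ρ x).toNNReal := measurable_tq.real_toNNReal
  have hint2 : Integrable (fun y => |y - θ|)
      (volume.withDensity fun x => ((tq μp ρ x).toNNReal : ℝ≥0∞)) := by
    rw [integrable_withDensity_iff_integrable_smul hmeas]
    apply (integrable_full hμ hρ1 θ).congr
    filter_upwards with x
    rw [NNReal.smul_def, smul_eq_mul, Real.coe_toNNReal _ (tq_nonneg hμ hρ1 x), mul_comm]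
  have hint1 : Integrable (fun y => |y - θ|)
      (ENNReal.ofReal ρ • Measure.dirac (0:ℝ)) := by
    apply Integrable.smul_measure _ ENNReal.ofReal_ne_top
    exact (integrable_const (|(0:ℝ) - θ|)).congr (ae_eq_dirac (fun y : ℝ => |y - θ|)).symm
  rw [toyRisk, toyMeasure, hq, integral_add_measure hint1 hint2,
    integral_smul_measure, integral_dirac, integral_withDensity_eq_integral_smul hmeas]
  have h1 : ENNReal.toReal (ENNReal.ofReal ρ) = ρ := ENNReal.toReal_ofReal hρ0.le
  have h2 : |(0:ℝ) - θ| = |θ| := by rw [zero_sub, abs_neg]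
  rw [h1, h2]
  congr 1
  apply integral_congr_ae
  filter_upwards with x
  rw [NNReal.smul_def, smul_eq_mul, Real.coe_toNNReal _ (tq_nonneg hμ hρ1 x), mul_comm]

/-- Integral of the density over `Ioi a` for `a ≥ 1`. -/
lemma integral_tq_Ioi (hμ : 1 < μp) {a : ℝ} (ha : 1 ≤ a) :
    ∫ y in Ioi a, tq μp ρ y = ((1 - ρ) / 2) * a ^ (-μp) := by
  have h0 : (0:ℝ) < a := lt_of_lt_of_le one_pos ha
  have hμ0 : (0:ℝ) < μp := by linarith
  rw [setIntegral_congr_fun measurableSet_Ioi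
    (g := fun y : ℝ => ((1 - ρ) * μp / 2) * y ^ (-(μp + 1)))
    (fun y hy => tq_eq (le_trans ha (le_of_lt hy)))]
  rw [MeasureTheory.integral_const_mul, integral_Ioi_rpow_of_lt (by linarith) h0]
  rw [show -(μp + 1) + 1 = -μp by ring]
  field_simp


lemma int0 (hμ : 1 < μp) (hρ1 : ρ < 1) : Integrable (fun y => |y| * tq μp ρ y) := by
  simpa using integrable_full hμ hρ1 0

lemma integrable_H (hμ : 1 < μp) (hρ1 : ρ < 1) (θ : ℝ) :
    Integrable (fun y => (|y - θ| - |y|) * tq μp ρ y) := by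
  have h := (integrable_full hμ hρ1 θ).sub (int0 hμ hρ1)
  exact h.congr (Filter.Eventually.of_forall fun y => by simp only [Pi.sub_apply]; ring)

lemma diff_eq (hμ : 1 < μp) (hρ1 : ρ < 1) (θ : ℝ) :
    (∫ y, |y - θ| * tq μp ρ y) - (∫ y, |y| * tq μp ρ y)
      = ∫ y, (|y - θ| - |y|) * tq μp ρ y := by
  rw [← integral_sub (integrable_full hμ hρ1 θ) (int0 hμ hρ1)]
  congr 1; ext y; ring

lemma split_H (hμ : 1 < μp) (hρ1 : ρ < 1) (θ : ℝ) :
    ∫ y, (|y - θ| - |y|) * tq μp ρ y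
      = (∫ y in Iic (-1:ℝ), (|y - θ| - |y|) * tq μp ρ y)
        + ∫ y in Ici (1:ℝ), (|y - θ| - |y|) * tq μp ρ y := by
  have hsupp : ∀ y ∉ Iic (-1:ℝ) ∪ Ici (1:ℝ), (|y - θ| - |y|) * tq μp ρ y = 0 := by
    intro y hy
    rw [Set.mem_union, Set.mem_Iic, Set.mem_Ici] at hy
    push_neg at hy
    have habs : |y| < 1 := abs_lt.mpr ⟨by linarith [hy.1], by linarith [hy.2]⟩
    simp [tq, not_le.mpr habs]
  rw [← setIntegral_eq_integral_of_forall_compl_eq_zero hsupp]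
  rw [setIntegral_union (by
        rw [Set.disjoint_left]; intro x hx hx2
        rw [Set.mem_Iic] at hx; rw [Set.mem_Ici] at hx2; linarith)
      measurableSet_Ici ((integrable_H hμ hρ1 θ).integrableOn)
      ((integrable_H hμ hρ1 θ).integrableOn)]

lemma integral_Iic_H (hμ : 1 < μp) {θ : ℝ} (hθ : 0 ≤ θ) :
    ∫ y in Iic (-1:ℝ), (|y - θ| - |y|) * tq μp ρ y = θ * ((1 - ρ) / 2) := by
  rw [show (-1:ℝ) = -(1:ℝ) by norm_num,
    ← integral_comp_neg_Ioi 1 (fun y => (|y - θ| - |y|) * tq μp ρ y)]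
  rw [setIntegral_congr_fun measurableSet_Ioi (g := fun y => θ * tq μp ρ y)
    (fun x hx => by
      have h1 : (1:ℝ) < x := hx
      rw [tq_even, show -x - θ = -(x + θ) by ring, abs_neg, abs_neg,
        abs_of_pos (by linarith : (0:ℝ) < x + θ), abs_of_pos (by linarith : (0:ℝ) < x)]
      ring)]
  rw [MeasureTheory.integral_const_mul, integral_tq_Ioi hμ le_rfl, Real.one_rpow]
  ring

lemma integral_Ici_H_small (hμ : 1 < μp) {θ : ℝ} (hθ : θ ≤ 1) :
    ∫ y in Ici (1:ℝ), (|y - θ| - |y|) * tq μp ρ y = -(θ * ((1 - ρ) / 2)) := by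
  rw [integral_Ici_eq_integral_Ioi]
  rw [setIntegral_congr_fun measurableSet_Ioi (g := fun y => (-θ) * tq μp ρ y)
    (fun x hx => by
      have h1 : (1:ℝ) < x := hx
      rw [abs_of_nonneg (by linarith : (0:ℝ) ≤ x - θ), abs_of_pos (by linarith : (0:ℝ) < x)]
      ring)]
  rw [MeasureTheory.integral_const_mul, integral_tq_Ioi hμ le_rfl, Real.one_rpow]
  ring

lemma integral_Ici_H_large (hμ : 1 < μp) (hρ1 : ρ < 1) {θ : ℝ} (hθ : 1 ≤ θ) :
    ∫ y in Ici (1:ℝ), (|y - θ| - |y|) * tq μp ρ y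
      = (1 - ρ) * (θ/2 - μp / (μp - 1) + θ ^ (1 - μp) / (μp - 1)) := by
  have hθ0 : (0:ℝ) < θ := by linarith
  have hμ0 : (0:ℝ) < μp := by linarith
  have hμ1 : μp - 1 ≠ 0 := by intro h; linarith [h]
  have hBA : θ * θ ^ (-μp) = θ ^ (1 - μp) := by
    rw [show (1:ℝ) - μp = 1 + (-μp) by ring, Real.rpow_add hθ0, Real.rpow_one]
  rw [← Set.Ico_union_Ici_eq_Ici hθ,
    setIntegral_union (by
        rw [Set.disjoint_left]; intro x hx hx2
        rw [Set.mem_Ico] at hx; rw [Set.mem_Ici] at hx2; linarith [hx.2])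
      measurableSet_Ici ((integrable_H hμ hρ1 θ).integrableOn)
      ((integrable_H hμ hρ1 θ).integrableOn)]
  have hIci : ∫ y in Ici θ, (|y - θ| - |y|) * tq μp ρ y
      = (-θ) * ((1 - ρ) / 2 * θ ^ (-μp)) := by
    rw [integral_Ici_eq_integral_Ioi]
    rw [setIntegral_congr_fun measurableSet_Ioi (g := fun y => (-θ) * tq μp ρ y)
      (fun x hx => by
        have h1 : θ < x := hx
        rw [abs_of_nonneg (by linarith : (0:ℝ) ≤ x - θ), abs_of_pos (by linarith : (0:ℝ) < x)]
        ring)]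
    rw [MeasureTheory.integral_const_mul, integral_tq_Ioi hμ hθ]
  have hIco : ∫ y in Ico (1:ℝ) θ, (|y - θ| - |y|) * tq μp ρ y
      = θ * ((1 - ρ) * μp / 2) * ((θ ^ (-μp) - 1) / (-μp))
        - 2 * ((1 - ρ) * μp / 2) * ((θ ^ (1 - μp) - 1) / (1 - μp)) := by
    rw [MeasureTheory.integral_Ico_eq_integral_Ioo, ← MeasureTheory.integral_Ioc_eq_integral_Ioo,
      ← intervalIntegral.integral_of_le hθ]
    have hcong : ∀ y ∈ Set.uIcc (1:ℝ) θ,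
        (|y - θ| - |y|) * tq μp ρ y
          = θ * ((1 - ρ) * μp / 2) * y ^ (-(μp + 1))
            - 2 * ((1 - ρ) * μp / 2) * y ^ (-μp) := by
      intro y hy
      rw [Set.uIcc_of_le hθ, Set.mem_Icc] at hy
      have hy0 : (0:ℝ) < y := by linarith [hy.1]
      have hyA : y * y ^ (-(μp + 1)) = y ^ (-μp) := by
        rw [show -μp = 1 + (-(μp + 1)) by ring, Real.rpow_add hy0, Real.rpow_one]
      rw [tq_eq hy.1, abs_of_nonpos (by linarith [hy.2] : y - θ ≤ 0),
        abs_of_pos hy0, ← hyA]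
      ring
    rw [intervalIntegral.integral_congr hcong]
    have hi1 : IntervalIntegrable (fun y : ℝ => θ * ((1 - ρ) * μp / 2) * y ^ (-(μp + 1)))
        volume 1 θ := by
      apply IntervalIntegrable.const_mul
      apply intervalIntegral.intervalIntegrable_rpow
      right
      rw [Set.uIcc_of_le hθ]
      intro h; rw [Set.mem_Icc] at h; linarith [h.1]
    have hi2 : IntervalIntegrable (fun y : ℝ => 2 * ((1 - ρ) * μp / 2) * y ^ (-μp))
        volume 1 θ := by
      apply IntervalIntegrable.const_mul
      apply intervalIntegral.intervalIntegrable_rpow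
      right
      rw [Set.uIcc_of_le hθ]
      intro h; rw [Set.mem_Icc] at h; linarith [h.1]
    rw [intervalIntegral.integral_sub hi1 hi2,
      intervalIntegral.integral_const_mul, intervalIntegral.integral_const_mul,
      integral_rpow (Or.inr ⟨by intro h; linarith [h], by
        rw [Set.uIcc_of_le hθ]; intro h; rw [Set.mem_Icc] at h; linarith [h.1]⟩),
      integral_rpow (Or.inr ⟨by intro h; linarith [h], by
        rw [Set.uIcc_of_le hθ]; intro h; rw [Set.mem_Icc] at h; linarith [h.1]⟩)]
    rw [show -(μp + 1) + 1 = -μp by ring, show -μp + 1 = 1 - μp by ring]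
    simp only [Real.one_rpow]
  rw [hIci, hIco, ← hBA]
  have hA : θ ^ (-μp) ≠ 0 := ne_of_gt (Real.rpow_pos_of_pos hθ0 _)
  have hμne : μp ≠ 0 := ne_of_gt hμ0
  have h1μ : (1:ℝ) - μp ≠ 0 := by intro h; linarith [h]
  field_simp
  ring


lemma toyRisk_zero (hμ : 1 < μp) (hρ0 : 0 < ρ) (hρ1 : ρ < 1) :
    toyRisk μp ρ 0 = ∫ y, |y| * tq μp ρ y := by
  rw [toyRisk_eq hμ hρ0 hρ1 0]
  simp

lemma key_small (hμ : 1 < μp) (hρ0 : 0 < ρ) (hρ1 : ρ < 1) {θ : ℝ}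
    (hθ0 : 0 ≤ θ) (hθ1 : θ ≤ 1) :
    toyRisk μp ρ θ - toyRisk μp ρ 0 = ρ * θ := by
  rw [toyRisk_eq hμ hρ0 hρ1 θ, toyRisk_zero hμ hρ0 hρ1, abs_of_nonneg hθ0]
  have : ρ * θ + (∫ y, |y - θ| * tq μp ρ y) - ∫ y, |y| * tq μp ρ y
      = ρ * θ + ((∫ y, |y - θ| * tq μp ρ y) - ∫ y, |y| * tq μp ρ y) := by ring
  rw [this, diff_eq hμ hρ1 θ, split_H hμ hρ1 θ, integral_Iic_H hμ hθ0,
    integral_Ici_H_small hμ hθ1]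
  ring

lemma key_large (hμ : 1 < μp) (hρ0 : 0 < ρ) (hρ1 : ρ < 1) {θ : ℝ} (hθ : 1 ≤ θ) :
    toyRisk μp ρ θ - toyRisk μp ρ 0
      = ρ * θ + (1 - ρ) * (θ - μp / (μp - 1) + θ ^ (1 - μp) / (μp - 1)) := by
  have hθ0 : (0:ℝ) ≤ θ := by linarith
  rw [toyRisk_eq hμ hρ0 hρ1 θ, toyRisk_zero hμ hρ0 hρ1, abs_of_nonneg hθ0]
  have : ρ * θ + (∫ y, |y - θ| * tq μp ρ y) - ∫ y, |y| * tq μp ρ y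
      = ρ * θ + ((∫ y, |y - θ| * tq μp ρ y) - ∫ y, |y| * tq μp ρ y) := by ring
  rw [this, diff_eq hμ hρ1 θ, split_H hμ hρ1 θ, integral_Iic_H hμ hθ0,
    integral_Ici_H_large hμ hρ1 hθ]
  ring

lemma toyRisk_neg (hμ : 1 < μp) (hρ0 : 0 < ρ) (hρ1 : ρ < 1) (θ : ℝ) :
    toyRisk μp ρ (-θ) = toyRisk μp ρ θ := by
  rw [toyRisk_eq hμ hρ0 hρ1, toyRisk_eq hμ hρ0 hρ1, abs_neg]
  congr 1
  rw [← integral_neg_eq_self (fun y => |y - θ| * tq μp ρ y) (volume : Measure ℝ)]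
  congr 1; ext y
  rw [tq_even, show -y - θ = -(y + θ) by ring, abs_neg, show y - -θ = y + θ by ring]

end Stmt12Aux

/-- for the toy heavy-tailed distribution,
`R_{ℓ1}(θ) − R_{ℓ1}(0) ≥ ρ` if and only if `|θ| ≥ 1`. -/
theorem stmt12 (μp ρ : ℝ) (hμ₁ : 1 < μp) (hμ₂ : μp ≤ 2) (hρ0 : 0 < ρ) (hρ1 : ρ < 1)
    (θ : ℝ) :
    ρ ≤ toyRisk μp ρ θ - toyRisk μp ρ 0 ↔ 1 ≤ |θ| := by
  wlog hθ0 : 0 ≤ θ generalizing θ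
  · rw [← abs_neg, ← Stmt12Aux.toyRisk_neg hμ₁ hρ0 hρ1 θ]
    exact this (-θ) (by linarith [not_le.mp hθ0])
  rw [abs_of_nonneg hθ0]
  rcases le_or_gt 1 θ with h1 | h1
  · rw [Stmt12Aux.key_large hμ₁ hρ0 hρ1 h1]
    refine ⟨fun _ => h1, fun _ => ?_⟩
    have hθp : (0:ℝ) < θ := by linarith
    set s : ℝ := θ ^ (μp - 1) with hs_def
    have hs0 : (0:ℝ) < s := Real.rpow_pos_of_pos hθp _
    have hs1 : (1:ℝ) ≤ s := Real.one_le_rpow h1 (by linarith)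
    have hts : θ ^ (1 - μp) * s = 1 := by
      rw [hs_def, ← Real.rpow_add hθp]
      norm_num
    have hbern : s ≤ 1 + (μp - 1) * (θ - 1) := by
      have := rpow_one_add_le_one_add_mul_self
        (show (-1:ℝ) ≤ θ - 1 by linarith) (show (0:ℝ) ≤ μp - 1 by linarith)
        (show μp - 1 ≤ 1 by linarith)
      rwa [show (1:ℝ) + (θ - 1) = θ by ring] at this
    set t : ℝ := θ ^ (1 - μp) with ht_def
    have ht0 : (0:ℝ) < t := Real.rpow_pos_of_pos hθp _
    have hexp : t * (s - 1) ^ 2 = s - 2 + t := by linear_combination (s - 2) * hts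
    have hkey : 1 - t ≤ (μp - 1) * (θ - 1) := by
      nlinarith [mul_nonneg ht0.le (sq_nonneg (s - 1))]
    have hμm : (0:ℝ) < μp - 1 := by linarith
    have hiden : θ - μp / (μp - 1) + t / (μp - 1) = (θ - 1) - (1 - t) / (μp - 1) := by
      field_simp
      ring
    rw [hiden]
    have hdiv : (1 - t) / (μp - 1) ≤ θ - 1 := by
      rw [div_le_iff₀ hμm]
      nlinarith [hkey]
    nlinarith [mul_le_mul_of_nonneg_left hdiv (show (0:ℝ) ≤ 1 - ρ by linarith)]
  · rw [Stmt12Aux.key_small hμ₁ hρ0 hρ1 hθ0 h1.le]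
    constructor
    · intro h; nlinarith
    · intro h; linarith
end
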